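/- arXiv:2310.13563 — 6 statements merged into one kernel-verified Lean document; each statement's English description precedes it below -/
import Mathlib

section
/- The 3-dimensional linear code over F_3 of length 9 generated by the three rows (0,0,0,0,1,1,1,1,1), (0,1,1,1,0,0,0,1,2), (1,0,1,2,0,1,2,2,2) is a trifferent code with exactly 27 codewords; in particular T(9) ≥ 27 and this maximum is attained by a linear code. -/
/-- A code `C ⊆ αⁿ` is trifferent if for any three pairwise distinct codewords
there exists a coordinate in which they pairwise differ. -/
def Trifferent {n : ℕ} {α : Type*} (C : Set (Fin n → α)) : Prop :=
  ∀ x ∈ C, ∀ y ∈ C, ∀ z ∈ C, x ≠ y → x ≠ z → y ≠ z →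
    ∃ i : Fin n, x i ≠ y i ∧ x i ≠ z i ∧ y i ≠ z i

/-- `T n` is the maximum cardinality of a trifferent code of length `n`
over the alphabet `{0,1,2}`. -/
noncomputable def T (n : ℕ) : ℕ :=
  sSup {m | ∃ C : Set (Fin n → Fin 3), Trifferent C ∧ C.ncard = m}

/-- The linear `[9,3]₃`-code generated by the three given rows. -/
noncomputable def linearCode9 : Submodule (ZMod 3) (Fin 9 → ZMod 3) :=
  Submodule.span (ZMod 3) ({![0,0,0,0,1,1,1,1,1], ![0,1,1,1,0,0,0,1,2], ![1,0,1,2,0,1,2,2,2]} : Set (Fin 9 → ZMod 3))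


private def gv (a b c : ZMod 3) : Fin 9 → ZMod 3 :=
  a • ![0,0,0,0,1,1,1,1,1] + b • ![0,1,1,1,0,0,0,1,2] + c • ![1,0,1,2,0,1,2,2,2]

set_option maxRecDepth 10000 in
private lemma key : ∀ a b c a' b' c' : ZMod 3, gv a b c ≠ 0 → gv a' b' c' ≠ 0 →
    gv a b c ≠ gv a' b' c' →
    ∃ i : Fin 9, gv a b c i ≠ 0 ∧ gv a' b' c' i ≠ 0 ∧ gv a b c i ≠ gv a' b' c' i := by decide

private lemma ginj : ∀ a b c a' b' c' : ZMod 3, gv a b c = gv a' b' c' →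
    a = a' ∧ b = b' ∧ c = c' := by decide

private lemma mem_iff (x : Fin 9 → ZMod 3) :
    x ∈ linearCode9 ↔ ∃ a b c, x = gv a b c := by
  unfold linearCode9
  rw [show ({![0,0,0,0,1,1,1,1,1], ![0,1,1,1,0,0,0,1,2], ![1,0,1,2,0,1,2,2,2]}
      : Set (Fin 9 → ZMod 3)) =
      insert ![0,0,0,0,1,1,1,1,1] (insert ![0,1,1,1,0,0,0,1,2] {![1,0,1,2,0,1,2,2,2]}) from rfl]
  simp only [Submodule.mem_span_insert, Submodule.mem_span_singleton]
  constructor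
  · rintro ⟨a, _, ⟨b, _, ⟨c, rfl⟩, rfl⟩, rfl⟩
    exact ⟨a, b, c, by simp [gv, add_assoc]⟩
  · rintro ⟨a, b, c, rfl⟩
    exact ⟨a, _, ⟨b, _, ⟨c, rfl⟩, rfl⟩, by simp [gv, add_assoc]⟩

private lemma code_eq :
    (linearCode9 : Set (Fin 9 → ZMod 3)) =
      ↑(Finset.image (fun p : ZMod 3 × ZMod 3 × ZMod 3 => gv p.1 p.2.1 p.2.2) Finset.univ) := by
  ext x
  simp only [SetLike.mem_coe, mem_iff, Finset.coe_image, Finset.coe_univ, Set.image_univ,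
    Set.mem_range, Prod.exists]
  constructor
  · rintro ⟨a, b, c, rfl⟩; exact ⟨a, b, c, rfl⟩
  · rintro ⟨a, b, c, rfl⟩; exact ⟨a, b, c, rfl⟩

theorem linear_trifferent_nine :
    Trifferent (linearCode9 : Set (Fin 9 → ZMod 3)) ∧
    (linearCode9 : Set (Fin 9 → ZMod 3)).ncard = 27 ∧
    27 ≤ T 9 := by
  have htriff : Trifferent (linearCode9 : Set (Fin 9 → ZMod 3)) := by
    intro x hx y hy z hz hxy hxz hyz
    have hxz' : x - z ∈ linearCode9 := sub_mem hx hz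
    have hyz' : y - z ∈ linearCode9 := sub_mem hy hz
    obtain ⟨a, b, c, hu⟩ := (mem_iff _).1 hxz'
    obtain ⟨a', b', c', hv⟩ := (mem_iff _).1 hyz'
    have h1 : gv a b c ≠ 0 := hu ▸ sub_ne_zero.mpr hxz
    have h2 : gv a' b' c' ≠ 0 := hv ▸ sub_ne_zero.mpr hyz
    have h3 : gv a b c ≠ gv a' b' c' := by
      rw [← hu, ← hv]
      intro h
      exact hxy (by have := sub_left_injective h; exact this)
    obtain ⟨i, hi1, hi2, hi3⟩ := key a b c a' b' c' h1 h2 h3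
    rw [← hu] at hi1 hi3
    rw [← hv] at hi2 hi3
    refine ⟨i, ?_, ?_, ?_⟩
    · intro h; exact hi3 (by simp [Pi.sub_apply, h])
    · intro h; exact hi1 (by simp [Pi.sub_apply, h])
    · intro h; exact hi2 (by simp [Pi.sub_apply, h])
  have hinj : Function.Injective (fun p : ZMod 3 × ZMod 3 × ZMod 3 => gv p.1 p.2.1 p.2.2) := by
    rintro ⟨a, b, c⟩ ⟨a', b', c'⟩ h
    obtain ⟨h1, h2, h3⟩ := ginj a b c a' b' c' h
    simp_all
  have hcard : (linearCode9 : Set (Fin 9 → ZMod 3)).ncard = 27 := by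
    rw [code_eq, Set.ncard_coe_finset, Finset.card_image_of_injective _ hinj]
    simp
  refine ⟨htriff, hcard, ?_⟩
  have hmem : 27 ∈ {m | ∃ C : Set (Fin 9 → Fin 3), Trifferent C ∧ C.ncard = m} :=
    ⟨(linearCode9 : Set (Fin 9 → ZMod 3)), htriff, hcard⟩
  refine le_csSup ⟨(Set.univ : Set (Fin 9 → Fin 3)).ncard, ?_⟩ hmem
  rintro m ⟨C, _, rfl⟩
  exact Set.ncard_le_ncard (Set.subset_univ C) Set.finite_univ
end

section
/- For every n ≥ 2, the maximum cardinality of a trifferent code of length n with minimum Hamming distance equal to 1 is exactly T(n−1) + 1. In particular, every trifferent code of length n that contains two codewords at Hamming distance 1 has cardinality at most T(n−1) + 1. -/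
/-- The minimum Hamming distance of a code. -/
noncomputable def minDist {n : ℕ} (C : Set (Fin n → Fin 3)) : ℕ :=
  sInf {d | ∃ x ∈ C, ∃ y ∈ C, x ≠ y ∧ hammingDist x y = d}

/-!
If `x, y ∈ C` differ only in coordinate `i`, then for any third codeword `z` the triple `x, y, z`
can only be separated at `i`, so `z i` is the symbol of `Fin 3` other than `x i` and `y i`. Hence
all codewords other than `x, y` agree at `i`, so deleting coordinate `i` maps `C \ {x}` onto a
trifferent code of length `n - 1`, injectively unless some `z` also differs from `y` only at `i`,
in which case `C = {x, y, z}`. Either way `|C| ≤ T(n - 1) + 1`.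
Conversely, take an optimal trifferent code `S` of length `n - 1` and `c ∈ S`; prefixing `0` to
every word other than `c` and replacing `c` by `1c` and `2c` gives a trifferent code with
`|S| + 1` words containing the pair `1c, 2c` at distance one.
-/

open Set

variable {n : ℕ} {α : Type*}

lemma Trifferent.mono {C D : Set (Fin n → α)} (hC : Trifferent C) (hDC : D ⊆ C) :
    Trifferent D :=
  fun x hx y hy z hz => hC x (hDC hx) y (hDC hy) z (hDC hz)

lemma trifferent_pair (a b : Fin n → α) : Trifferent ({a, b} : Set (Fin n → α)) := by
  intro x hx y hy z hz hxy hxz hyz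
  simp only [mem_insert_iff, mem_singleton_iff] at hx hy hz
  rcases hx with rfl | rfl <;> rcases hy with rfl | rfl <;> rcases hz with rfl | rfl <;>
    contradiction

lemma eq_of_apply_eq_of_removeNth_eq {f g : Fin (n + 1) → α} {i : Fin (n + 1)} (h : f i = g i)
    (hr : i.removeNth f = i.removeNth g) : f = g :=
  funext <| (Fin.forall_iff_succAbove i).2 ⟨h, congrFun hr⟩

lemma hammingDist_eq_one_iff [DecidableEq α] {x y : Fin (n + 1) → α} :
    hammingDist x y = 1 ↔ ∃ i, x i ≠ y i ∧ i.removeNth x = i.removeNth y := by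
  simp only [hammingDist, Finset.card_eq_one, Finset.eq_singleton_iff_unique_mem,
    Finset.mem_filter, Finset.mem_univ, true_and]
  refine exists_congr fun i => and_congr_right fun _ => ⟨fun h => ?_, fun h j hj => ?_⟩
  · exact funext fun k => by_contra fun hk => Fin.succAbove_ne i k (h _ hk)
  · by_contra hji
    obtain ⟨k, rfl⟩ := Fin.exists_succAbove_eq hji
    exact hj (congrFun h k)

lemma Trifferent.image_removeNth {C : Set (Fin (n + 1) → α)} (hC : Trifferent C)
    {i : Fin (n + 1)} (h : ∀ x ∈ C, ∀ y ∈ C, ∀ z ∈ C, x ≠ y → x ≠ z → y ≠ z →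
      x i = y i ∨ x i = z i ∨ y i = z i) :
    Trifferent (i.removeNth '' C) := by
  rintro _ ⟨x, hx, rfl⟩ _ ⟨y, hy, rfl⟩ _ ⟨z, hz, rfl⟩ hxy hxz hyz
  have hxy' := ne_of_apply_ne _ hxy
  have hxz' := ne_of_apply_ne _ hxz
  have hyz' := ne_of_apply_ne _ hyz
  obtain ⟨j, hj⟩ := hC x hx y hy z hz hxy' hxz' hyz'
  obtain ⟨k, rfl⟩ : ∃ k, i.succAbove k = j := Fin.exists_succAbove_eq <| by
    rintro rfl
    rcases h x hx y hy z hz hxy' hxz' hyz' with e | e | e <;> simp only [e, ne_eq] at hj <;>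
      tauto
  exact ⟨k, hj⟩

lemma Trifferent.of_removeNth {C : Set (Fin (n + 1) → α)} {S : Set (Fin n → α)}
    {i : Fin (n + 1)} (hS : Trifferent S) (hCS : MapsTo i.removeNth C S)
    (h : ∀ x ∈ C, ∀ y ∈ C, x ≠ y → i.removeNth x = i.removeNth y →
      ∀ z ∈ C, i.removeNth z ≠ i.removeNth x → x i ≠ z i) :
    Trifferent C := by
  have hsep : ∀ x ∈ C, ∀ y ∈ C, ∀ z ∈ C, x ≠ y → x ≠ z → y ≠ z →
      i.removeNth x = i.removeNth y → x i ≠ y i ∧ x i ≠ z i ∧ y i ≠ z i := by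
    intro x hx y hy z hz hxy hxz hyz hr
    have hxy' : x i ≠ y i := fun e => hxy (eq_of_apply_eq_of_removeNth_eq e hr)
    by_cases hrz : i.removeNth z = i.removeNth x
    · exact ⟨hxy', fun e => hxz (eq_of_apply_eq_of_removeNth_eq e hrz.symm),
        fun e => hyz (eq_of_apply_eq_of_removeNth_eq e (hr ▸ hrz.symm))⟩
    · exact ⟨hxy', h x hx y hy hxy hr z hz hrz, h y hy x hx hxy.symm hr.symm z hz (hr ▸ hrz)⟩
  intro x hx y hy z hz hxy hxz hyz
  by_cases hrxy : i.removeNth x = i.removeNth y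
  · exact ⟨i, hsep x hx y hy z hz hxy hxz hyz hrxy⟩
  by_cases hrxz : i.removeNth x = i.removeNth z
  · obtain ⟨h₁, h₂, h₃⟩ := hsep x hx z hz y hy hxz hxy hyz.symm hrxz
    exact ⟨i, h₂, h₁, h₃.symm⟩
  by_cases hryz : i.removeNth y = i.removeNth z
  · obtain ⟨h₁, h₂, h₃⟩ := hsep y hy z hz x hx hyz hxy.symm hxz.symm hryz
    exact ⟨i, h₂.symm, h₃.symm, h₁⟩
  obtain ⟨k, hk⟩ := hS _ (hCS hx) _ (hCS hy) _ (hCS hz) hrxy hrxz hryz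
  exact ⟨i.succAbove k, hk⟩

lemma Trifferent.apply_ne_of_removeNth_eq {C : Set (Fin (n + 1) → α)} {x y z : Fin (n + 1) → α}
    {i : Fin (n + 1)} (hC : Trifferent C) (hx : x ∈ C) (hy : y ∈ C) (hxy : x i ≠ y i)
    (hr : i.removeNth x = i.removeNth y) (hz : z ∈ C) (hzx : z ≠ x) (hzy : z ≠ y) :
    z i ≠ x i ∧ z i ≠ y i := by
  obtain ⟨j, hj⟩ := hC x hx y hy z hz (ne_of_apply_ne (· i) hxy) hzx.symm hzy.symm
  obtain rfl : j = i := by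
    by_contra hji
    obtain ⟨k, rfl⟩ := Fin.exists_succAbove_eq hji
    exact hj.1 (congrFun hr k)
  exact ⟨hj.2.1.symm, hj.2.2.symm⟩

lemma minDist_eq_one_iff {C : Set (Fin n → Fin 3)} :
    minDist C = 1 ↔ ∃ x ∈ C, ∃ y ∈ C, hammingDist x y = 1 := by
  constructor
  · intro h
    unfold minDist at h
    have hmem := Nat.sInf_mem (Nat.nonempty_of_pos_sInf (h ▸ one_pos))
    rw [h] at hmem
    obtain ⟨x, hx, y, hy, -, hd⟩ := hmem
    exact ⟨x, hx, y, hy, hd⟩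
  · rintro ⟨x, hx, y, hy, hd⟩
    have hxy : x ≠ y := hammingDist_pos.1 (hd ▸ one_pos)
    refine le_antisymm (Nat.sInf_le ⟨x, hx, y, hy, hxy, hd⟩)
      (le_csInf ⟨1, x, hx, y, hy, hxy, hd⟩ ?_)
    rintro _ ⟨u, -, v, -, huv, rfl⟩
    exact hammingDist_pos.2 huv

section T

variable {k : ℕ}

lemma bddAbove_trifferent_ncard (k : ℕ) :
    BddAbove {m | ∃ C : Set (Fin k → Fin 3), Trifferent C ∧ C.ncard = m} :=
  ⟨Nat.card (Fin k → Fin 3), by rintro _ ⟨C, -, rfl⟩; exact ncard_le_card C⟩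

lemma Trifferent.ncard_le_T {C : Set (Fin k → Fin 3)} (hC : Trifferent C) : C.ncard ≤ T k :=
  le_csSup (bddAbove_trifferent_ncard k) ⟨C, hC, rfl⟩

lemma exists_trifferent_ncard_eq_T (k : ℕ) :
    ∃ C : Set (Fin k → Fin 3), Trifferent C ∧ C.ncard = T k :=
  Nat.sSup_mem (s := {m | ∃ C : Set (Fin k → Fin 3), Trifferent C ∧ C.ncard = m})
    ⟨0, ∅, fun _ h => h.elim, ncard_empty _⟩ (bddAbove_trifferent_ncard k)

lemma two_le_T (hk : 1 ≤ k) : 2 ≤ T k := by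
  have hne : (fun _ : Fin k => (0 : Fin 3)) ≠ fun _ => 1 :=
    fun h => absurd (congrFun h ⟨0, hk⟩) (by decide)
  exact (ncard_pair hne).symm.le.trans (trifferent_pair _ _).ncard_le_T

end T

section DistanceOne

variable {m : ℕ} {C : Set (Fin (m + 1) → Fin 3)} {x y z w : Fin (m + 1) → Fin 3}
  {i : Fin (m + 1)}

lemma Trifferent.apply_eq_of_removeNth_eq (hC : Trifferent C) (hx : x ∈ C) (hy : y ∈ C)
    (hxy : x i ≠ y i) (hr : i.removeNth x = i.removeNth y) (hz : z ∈ C) (hzx : z ≠ x)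
    (hzy : z ≠ y) (hw : w ∈ C) (hwx : w ≠ x) (hwy : w ≠ y) : z i = w i := by
  have third : ∀ a b c d : Fin 3, a ≠ b → c ≠ a → c ≠ b → d ≠ a → d ≠ b → c = d := by decide
  obtain ⟨hzx', hzy'⟩ := hC.apply_ne_of_removeNth_eq hx hy hxy hr hz hzx hzy
  obtain ⟨hwx', hwy'⟩ := hC.apply_ne_of_removeNth_eq hx hy hxy hr hw hwx hwy
  exact third _ _ _ _ hxy hzx' hzy' hwx' hwy'

lemma Trifferent.subset_triple_of_removeNth_eq (hC : Trifferent C) (hx : x ∈ C) (hy : y ∈ C)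
    (hxy : x i ≠ y i) (hr : i.removeNth x = i.removeNth y) (hz : z ∈ C) (hzx : z ≠ x)
    (hzy : z ≠ y) (hrz : i.removeNth z = i.removeNth y) : C ⊆ {x, y, z} := by
  intro w hw
  by_contra hw'
  simp only [mem_insert_iff, mem_singleton_iff, not_or] at hw'
  obtain ⟨hwx, hwy, hwz⟩ := hw'
  obtain ⟨j, hj⟩ := hC y hy z hz w hw hzy.symm (Ne.symm hwy) (Ne.symm hwz)
  obtain rfl : j = i := by
    by_contra hji
    obtain ⟨k, rfl⟩ := Fin.exists_succAbove_eq hji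
    exact hj.1 (congrFun hrz k).symm
  exact hj.2.2 (hC.apply_eq_of_removeNth_eq hx hy hxy hr hz hzx hzy hw hwx hwy)

lemma Trifferent.injOn_removeNth (hC : Trifferent C) (hx : x ∈ C) (hy : y ∈ C)
    (hxy : x i ≠ y i) (hr : i.removeNth x = i.removeNth y)
    (hline : ∀ z ∈ C, z ≠ x → z ≠ y → i.removeNth z ≠ i.removeNth y) :
    InjOn i.removeNth (C \ {x}) := by
  rintro z ⟨hz, hzx⟩ w ⟨hw, hwx⟩ hzw
  by_cases hzy : z = y
  · subst hzy
    by_contra hne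
    exact hline w hw hwx (Ne.symm hne) hzw.symm
  by_cases hwy : w = y
  · subst hwy
    exact absurd hzw (hline z hz hzx hzy)
  exact eq_of_apply_eq_of_removeNth_eq
    (hC.apply_eq_of_removeNth_eq hx hy hxy hr hz hzx hzy hw hwx hwy) hzw

lemma Trifferent.image_removeNth_sdiff_singleton (hC : Trifferent C) (hx : x ∈ C) (hy : y ∈ C)
    (hxy : x i ≠ y i) (hr : i.removeNth x = i.removeNth y) :
    Trifferent (i.removeNth '' (C \ {x})) := by
  refine (hC.mono sdiff_subset).image_removeNth ?_
  have key {a b} (ha : a ∈ C \ {x}) (hay : a ≠ y) (hb : b ∈ C \ {x}) (hby : b ≠ y) : a i = b i :=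
    hC.apply_eq_of_removeNth_eq hx hy hxy hr ha.1 ha.2 hay hb.1 hb.2 hby
  intro z hz w hw v hv hzw hzv hwv
  rcases eq_or_ne z y with rfl | hzy
  · exact .inr <| .inr <| key hw hzw.symm hv hzv.symm
  rcases eq_or_ne w y with rfl | hwy
  · exact .inr <| .inl <| key hz hzy hv hwv.symm
  · exact .inl <| key hz hzy hw hwy

theorem Trifferent.ncard_le_T_add_one (hm : 1 ≤ m) (hC : Trifferent C) (hx : x ∈ C)
    (hy : y ∈ C) (hd : hammingDist x y = 1) : C.ncard ≤ T m + 1 := by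
  obtain ⟨i, hxy, hr⟩ := hammingDist_eq_one_iff.1 hd
  by_cases hline : ∃ z ∈ C, z ≠ x ∧ z ≠ y ∧ i.removeNth z = i.removeNth y
  · obtain ⟨z, hz, hzx, hzy, hrz⟩ := hline
    have h3 : ({x, y, z} : Set _).ncard = 3 :=
      ncard_eq_three.2 ⟨x, y, z, ne_of_apply_ne (· i) hxy, hzx.symm, hzy.symm, rfl⟩
    calc C.ncard ≤ ({x, y, z} : Set _).ncard :=
          ncard_le_ncard (hC.subset_triple_of_removeNth_eq hx hy hxy hr hz hzx hzy hrz)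
      _ ≤ T m + 1 := by rw [h3]; linarith [two_le_T hm]
  · push Not at hline
    calc C.ncard = (C \ {x}).ncard + 1 := (ncard_sdiff_singleton_add_one hx).symm
      _ = (i.removeNth '' (C \ {x})).ncard + 1 := by
          rw [(hC.injOn_removeNth hx hy hxy hr hline).ncard_image]
      _ ≤ T m + 1 := by
          gcongr
          exact (hC.image_removeNth_sdiff_singleton hx hy hxy hr).ncard_le_T

end DistanceOne

section Split

variable {m : ℕ} {S : Set (Fin m → Fin 3)} {c : Fin m → Fin 3}

def splitCodeword (S : Set (Fin m → Fin 3)) (c : Fin m → Fin 3) : Set (Fin (m + 1) → Fin 3) :=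
  {Fin.cons 1 c, Fin.cons 2 c} ∪ Fin.cons 0 '' (S \ {c})

lemma splitCodeword_tail_mem_and_head_eq_zero_iff (hc : c ∈ S) {u : Fin (m + 1) → Fin 3}
    (hu : u ∈ splitCodeword S c) : Fin.tail u ∈ S ∧ (u 0 = 0 ↔ Fin.tail u ≠ c) := by
  rcases hu with (rfl | rfl) | ⟨d, ⟨hd, hdc⟩, rfl⟩ <;> simp_all

lemma trifferent_splitCodeword (hS : Trifferent S) (hc : c ∈ S) :
    Trifferent (splitCodeword S c) := by
  have hmem {u} (hu : u ∈ splitCodeword S c) := splitCodeword_tail_mem_and_head_eq_zero_iff hc hu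
  refine hS.of_removeNth (i := 0) (fun u hu => by simpa using (hmem hu).1) ?_
  simp only [Fin.removeNth_zero]
  intro u hu v hv huv hr w hw hrw
  have htail : Fin.tail u = c := by
    by_contra hne
    have hv0 : v 0 = 0 := (hmem hv).2.2 (hr ▸ hne)
    exact huv (eq_of_apply_eq_of_removeNth_eq (i := 0) (((hmem hu).2.2 hne).trans hv0.symm)
      (by simpa using hr))
  rw [(hmem hw).2.2 (htail ▸ hrw)]
  exact fun hu0 => (hmem hu).2.1 hu0 htail

lemma ncard_splitCodeword (hc : c ∈ S) : (splitCodeword S c).ncard = S.ncard + 1 := by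
  have h12 : (Fin.cons 1 c : Fin (m + 1) → Fin 3) ≠ Fin.cons 2 c := by simp [Fin.cons_inj]
  have hdisj : Disjoint ({Fin.cons 1 c, Fin.cons 2 c} : Set (Fin (m + 1) → Fin 3))
      (Fin.cons 0 '' (S \ {c})) := by
    rw [disjoint_right]
    rintro _ ⟨d, -, rfl⟩
    simp [Fin.cons_inj]
  rw [splitCodeword, ncard_union_eq hdisj, ncard_pair h12,
    ncard_image_of_injective _ (Fin.cons_right_injective _), ← ncard_sdiff_singleton_add_one hc]
  ring

lemma minDist_splitCodeword : minDist (splitCodeword S c) = 1 :=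
  minDist_eq_one_iff.2 ⟨_, .inl (.inl rfl), _, .inl (.inr rfl),
    hammingDist_eq_one_iff.2 ⟨0, by simp, by simp⟩⟩

end Split

theorem T_minDist_one {n : ℕ} (hn : 2 ≤ n) :
    IsGreatest {m | ∃ C : Set (Fin n → Fin 3),
        Trifferent C ∧ minDist C = 1 ∧ C.ncard = m} (T (n - 1) + 1) ∧
    ∀ C : Set (Fin n → Fin 3), Trifferent C →
      (∃ x ∈ C, ∃ y ∈ C, hammingDist x y = 1) → C.ncard ≤ T (n - 1) + 1 := by
  obtain ⟨m, rfl⟩ : ∃ m, n = m + 1 := ⟨n - 1, by omega⟩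
  have hm : 1 ≤ m := by omega
  rw [Nat.add_sub_cancel]
  have upper (C : Set (Fin (m + 1) → Fin 3)) (hC : Trifferent C)
      (hd : ∃ x ∈ C, ∃ y ∈ C, hammingDist x y = 1) : C.ncard ≤ T m + 1 := by
    obtain ⟨x, hx, y, hy, hd⟩ := hd
    exact hC.ncard_le_T_add_one hm hx hy hd
  refine ⟨⟨?_, ?_⟩, upper⟩
  · obtain ⟨S, hS, hST⟩ := exists_trifferent_ncard_eq_T m
    obtain ⟨c, hc⟩ : S.Nonempty := nonempty_of_ncard_ne_zero (by linarith [two_le_T hm])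
    exact ⟨splitCodeword S c, trifferent_splitCodeword hS hc, minDist_splitCodeword,
      by rw [ncard_splitCodeword hc, hST]⟩
  · rintro _ ⟨C, hC, hmin, rfl⟩
    exact upper C hC (minDist_eq_one_iff.1 hmin)
end

section
/- Let C be a trifferent code of length n, let 2 ≤ d ≤ n−1, and let π : C → {0,1,2}^d be the projection onto the first d coordinates. If π is not surjective, then 2^d · #C ≤ T(n−d) · (3^d − 1), i.e., #C ≤ T(n−d) · (3^d − 1)/2^d. -/
open Finset

lemma trifferent_ncard_le_T {m : ℕ} {D : Set (Fin m → Fin 3)} (hD : Trifferent D) :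
    D.ncard ≤ T m := by
  apply le_csSup
  · refine ⟨3 ^ m, ?_⟩
    rintro k ⟨E, hE, rfl⟩
    calc E.ncard ≤ (Set.univ : Set (Fin m → Fin 3)).ncard :=
          Set.ncard_le_ncard (Set.subset_univ E) Set.finite_univ
      _ = 3 ^ m := by
          rw [Set.ncard_univ, Nat.card_eq_fintype_card]
          simp
  · exact ⟨D, hD, rfl⟩

lemma three_le_T {m : ℕ} (hm : 1 ≤ m) : 3 ≤ T m := by
  have htr : Trifferent (Set.range (fun (a : Fin 3) (_ : Fin m) => a)) := by
    rintro x ⟨a, rfl⟩ y ⟨b, rfl⟩ z ⟨c, rfl⟩ hxy hxz hyz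
    exact ⟨⟨0, hm⟩, fun hh => hxy (funext fun _ => hh), fun hh => hxz (funext fun _ => hh),
      fun hh => hyz (funext fun _ => hh)⟩
  have hcard : (Set.range (fun (a : Fin 3) (_ : Fin m) => a)).ncard = 3 := by
    rw [← Set.image_univ, Set.ncard_image_of_injective _
      (fun a b hh => congrFun hh ⟨0, hm⟩)]
    rw [Set.ncard_univ, Nat.card_eq_fintype_card]
    simp
  calc (3:ℕ) = _ := hcard.symm
    _ ≤ T m := trifferent_ncard_le_T htr
open Finset

lemma fin3_contra : ∀ a b c e : Fin 3, a ≠ b → a ≠ c → b ≠ c → e ≠ a → e ≠ b → e ≠ c → False := by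
  decide

lemma subcube_le {n d : ℕ} (hdn : d < n) {C : Set (Fin n → Fin 3)} (hC : Trifferent C)
    (h : d ≤ n) (u : Fin d → Fin 3) :
    {c ∈ C | ∀ i, u i ≠ c (Fin.castLE h i)}.ncard ≤ T (n - d) := by
  set m := n - d with hm
  have hm1 : 1 ≤ m := by omega
  set σ : (Fin n → Fin 3) → (Fin m → Fin 3) := fun c j => c ⟨d + j.1, by omega⟩ with hσ
  set U : Set (Fin n → Fin 3) := {c ∈ C | ∀ i, u i ≠ c (Fin.castLE h i)} with hU
  have helper : ∀ x ∈ U, ∀ y ∈ U, ∀ z ∈ U, x ≠ y → x ≠ z → y ≠ z →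
      ∃ j : Fin m, σ x j ≠ σ y j ∧ σ x j ≠ σ z j ∧ σ y j ≠ σ z j := by
    rintro x ⟨hxC, hxu⟩ y ⟨hyC, hyu⟩ z ⟨hzC, hzu⟩ hxy hxz hyz
    obtain ⟨i, h1, h2, h3⟩ := hC x hxC y hyC z hzC hxy hxz hyz
    by_cases hi : i.1 < d
    · exfalso
      have hix : Fin.castLE h ⟨i.1, hi⟩ = i := rfl
      exact fin3_contra (x i) (y i) (z i) (u ⟨i.1, hi⟩) h1 h2 h3
        (hxu ⟨i.1, hi⟩) (hyu ⟨i.1, hi⟩) (hzu ⟨i.1, hi⟩)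
    · refine ⟨⟨i.1 - d, by omega⟩, ?_⟩
      have : (⟨d + (i.1 - d), by omega⟩ : Fin n) = i := by
        apply Fin.ext; simp; omega
      simp only [hσ, this]
      exact ⟨h1, h2, h3⟩
  have htr : Trifferent (σ '' U) := by
    rintro x' ⟨x, hx, rfl⟩ y' ⟨y, hy, rfl⟩ z' ⟨z, hz, rfl⟩ hxy hxz hyz
    exact helper x hx y hy z hz (fun hh => hxy (hh ▸ rfl)) (fun hh => hxz (hh ▸ rfl))
      (fun hh => hyz (hh ▸ rfl))
  by_cases hinj : Set.InjOn σ U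
  · rw [← Set.ncard_image_of_injOn hinj]
    exact trifferent_ncard_le_T htr
  · rw [Set.InjOn] at hinj
    push_neg at hinj
    obtain ⟨x, hx, y, hy, hσxy, hxy⟩ := hinj
    have hsub : U ⊆ {x, y} := by
      intro z hz
      by_contra hzm
      simp only [Set.mem_insert_iff, Set.mem_singleton_iff] at hzm
      push_neg at hzm
      obtain ⟨j, hj, _, _⟩ := helper x hx y hy z hz hxy
        (fun hh => hzm.1 hh.symm) (fun hh => hzm.2 hh.symm)
      exact hj (congrFun hσxy j)
    calc U.ncard ≤ ({x, y} : Set (Fin n → Fin 3)).ncard :=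
          Set.ncard_le_ncard hsub (Set.toFinite _)
      _ ≤ 2 := by
          calc ({x, y} : Set (Fin n → Fin 3)).ncard ≤ ({y} : Set _).ncard + 1 :=
                Set.ncard_insert_le x {y}
            _ = 2 := by rw [Set.ncard_singleton]
      _ ≤ T m := le_trans (by norm_num) (three_le_T hm1)
open Finset

def agr {d : ℕ} (w u : Fin d → Fin 3) : ℕ := (univ.filter fun i => u i = w i).card

lemma sign_eq_prod {d : ℕ} (w u : Fin d → Fin 3) :
    ((-1 : ℤ) ^ agr w u) = ∏ i, (if u i = w i then (-1 : ℤ) else 1) := by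
  rw [Finset.prod_ite, Finset.prod_const, Finset.prod_const, one_pow, mul_one, agr]

lemma sum_prod_swap {d : ℕ} (f : Fin d → Fin 3 → ℤ) :
    ∑ u : Fin d → Fin 3, ∏ i, f i (u i) = ∏ i, ∑ a, f i a := by
  rw [Finset.prod_univ_sum, Fintype.piFinset_univ]

lemma sum_sign_all {d : ℕ} (w : Fin d → Fin 3) :
    ∑ u : Fin d → Fin 3, ((-1 : ℤ) ^ agr w u) = 1 := by
  have h1 : ∀ b : Fin 3, (∑ a : Fin 3, if a = b then (-1 : ℤ) else 1) = 1 := by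
    intro b
    rw [Fin.sum_univ_three]
    fin_cases b <;> decide
  calc ∑ u : Fin d → Fin 3, ((-1 : ℤ) ^ agr w u)
      = ∑ u : Fin d → Fin 3, ∏ i, (if u i = w i then (-1 : ℤ) else 1) := by
        simp_rw [sign_eq_prod]
    _ = ∏ i, ∑ a : Fin 3, (if a = w i then (-1 : ℤ) else 1) := sum_prod_swap (fun i a => if a = w i then (-1 : ℤ) else 1)
    _ = ∏ _i : Fin d, (1 : ℤ) := Finset.prod_congr rfl (fun i _ => h1 (w i))
    _ = 1 := Finset.prod_const_one

lemma odd_card_all {d : ℕ} (w : Fin d → Fin 3) :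
    2 * (univ.filter fun u : Fin d → Fin 3 => Odd (agr w u)).card = 3 ^ d - 1 := by
  have hsum := sum_sign_all w
  rw [← Finset.sum_filter_add_sum_filter_not univ (fun u => Odd (agr w u))] at hsum
  have hO : ∑ u ∈ univ.filter (fun u : Fin d → Fin 3 => Odd (agr w u)), ((-1:ℤ) ^ agr w u)
      = -((univ.filter fun u : Fin d → Fin 3 => Odd (agr w u)).card : ℤ) := by
    rw [Finset.sum_congr rfl (fun u hu => (Finset.mem_filter.mp hu).2.neg_one_pow)]
    simp
  have hE : ∑ u ∈ univ.filter (fun u : Fin d → Fin 3 => ¬ Odd (agr w u)), ((-1:ℤ) ^ agr w u)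
      = ((univ.filter fun u : Fin d → Fin 3 => ¬ Odd (agr w u)).card : ℤ) := by
    rw [Finset.sum_congr rfl (fun u hu =>
      (Nat.not_odd_iff_even.mp (Finset.mem_filter.mp hu).2).neg_one_pow)]
    simp
  rw [hO, hE] at hsum
  have htot : (univ.filter fun u : Fin d → Fin 3 => Odd (agr w u)).card
      + (univ.filter fun u : Fin d → Fin 3 => ¬ Odd (agr w u)).card = 3 ^ d := by
    rw [Finset.card_filter_add_card_filter_not, Finset.card_univ]
    simp
  have h3 : 1 ≤ 3 ^ d := Nat.one_le_pow _ _ (by norm_num)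
  omega
open Finset

lemma odd_card_restricted {d : ℕ} (hd1 : 1 ≤ d) (w p : Fin d → Fin 3) (hpw : p ≠ w) :
    ((univ.filter fun u : Fin d → Fin 3 => Odd (agr w u)).filter
      fun u => ∀ i, u i ≠ p i).card = 2 ^ (d - 1) := by
  rw [Finset.filter_comm]
  set S : Finset (Fin d → Fin 3) := univ.filter (fun u => ∀ i, u i ≠ p i) with hS
  have hind : ∀ u : Fin d → Fin 3, (∏ i, if u i = p i then (0:ℤ) else 1)
      = if (∀ i, u i ≠ p i) then 1 else 0 := by
    intro u
    by_cases h : ∀ i, u i ≠ p i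
    · rw [if_pos h]; exact Finset.prod_eq_one fun i _ => if_neg (h i)
    · rw [if_neg h]
      push_neg at h
      obtain ⟨i, hi⟩ := h
      exact Finset.prod_eq_zero (mem_univ i) (if_pos hi)
  -- cardinality of S
  have hc1 : ∀ b : Fin 3, (∑ a : Fin 3, if a = b then (0:ℤ) else 1) = 2 := by
    intro b
    rw [Fin.sum_univ_three]
    fin_cases b <;> decide
  have hScard : (S.card : ℤ) = 2 ^ d := by
    have := sum_prod_swap (fun i a => if a = p i then (0:ℤ) else 1)
    rw [Finset.prod_congr rfl (fun i (_ : i ∈ univ) => hc1 (p i)), Finset.prod_const,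
      Finset.card_univ, Fintype.card_fin] at this
    calc (S.card : ℤ) = ∑ u : Fin d → Fin 3, if (∀ i, u i ≠ p i) then (1:ℤ) else 0 := by
          rw [Finset.sum_boole]
      _ = ∑ u : Fin d → Fin 3, ∏ i, if u i = p i then (0:ℤ) else 1 := by
          exact Finset.sum_congr rfl fun u _ => (hind u).symm
      _ = (2:ℤ) ^ d := this
  -- the signed sum over S vanishes
  have hc2 : ∀ b c : Fin 3, b ≠ c →
      (∑ a : Fin 3, (if a = b then (0:ℤ) else 1) * (if a = c then (-1:ℤ) else 1)) = 0 := by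
    intro b c hbc
    rw [Fin.sum_univ_three]
    fin_cases b <;> fin_cases c <;> simp_all
  have hzero : ∑ u ∈ S, ((-1:ℤ) ^ agr w u) = 0 := by
    obtain ⟨i0, hi0⟩ := Function.ne_iff.mp hpw
    have hswap := sum_prod_swap
      (fun i a => (if a = p i then (0:ℤ) else 1) * (if a = w i then (-1:ℤ) else 1))
    have hrhs : (∏ i, ∑ a : Fin 3,
        (if a = p i then (0:ℤ) else 1) * (if a = w i then (-1:ℤ) else 1)) = 0 :=
      Finset.prod_eq_zero (mem_univ i0) (hc2 (p i0) (w i0) hi0)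
    have hlhs : ∑ u : Fin d → Fin 3,
        (∏ i, (if u i = p i then (0:ℤ) else 1) * (if u i = w i then (-1:ℤ) else 1))
        = ∑ u ∈ S, ((-1:ℤ) ^ agr w u) := by
      calc ∑ u : Fin d → Fin 3,
            (∏ i, (if u i = p i then (0:ℤ) else 1) * (if u i = w i then (-1:ℤ) else 1))
          = ∑ u : Fin d → Fin 3, (if (∀ i, u i ≠ p i) then (1:ℤ) else 0) * ((-1:ℤ) ^ agr w u) := by
            refine Finset.sum_congr rfl fun u _ => ?_
            rw [Finset.prod_mul_distrib, hind u, ← sign_eq_prod]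
        _ = ∑ u : Fin d → Fin 3, (if (∀ i, u i ≠ p i) then ((-1:ℤ) ^ agr w u) else 0) := by
            refine Finset.sum_congr rfl fun u _ => ?_
            rw [ite_mul, one_mul, zero_mul]
        _ = ∑ u ∈ S, ((-1:ℤ) ^ agr w u) := by
            rw [Finset.sum_filter]
    rw [hlhs, hrhs] at hswap
    exact hswap
  -- split by parity
  rw [← Finset.sum_filter_add_sum_filter_not S (fun u => Odd (agr w u))] at hzero
  have hO : ∑ u ∈ S.filter (fun u => Odd (agr w u)), ((-1:ℤ) ^ agr w u)
      = -((S.filter fun u => Odd (agr w u)).card : ℤ) := by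
    rw [Finset.sum_congr rfl (fun u hu => (Finset.mem_filter.mp hu).2.neg_one_pow)]
    simp
  have hE : ∑ u ∈ S.filter (fun u => ¬ Odd (agr w u)), ((-1:ℤ) ^ agr w u)
      = ((S.filter fun u => ¬ Odd (agr w u)).card : ℤ) := by
    rw [Finset.sum_congr rfl (fun u hu =>
      (Nat.not_odd_iff_even.mp (Finset.mem_filter.mp hu).2).neg_one_pow)]
    simp
  rw [hO, hE] at hzero
  have htot : (S.filter fun u => Odd (agr w u)).card
      + (S.filter fun u => ¬ Odd (agr w u)).card = S.card :=
    Finset.card_filter_add_card_filter_not _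
  have hpow : (2:ℕ) ^ d = 2 * 2 ^ (d - 1) := by
    conv_lhs => rw [show d = (d - 1) + 1 by omega]
    rw [pow_succ]
    ring
  have hScard' : S.card = 2 ^ d := by exact_mod_cast hScard
  omega
open Finset

theorem not_surjective_bound {n d : ℕ} (C : Set (Fin n → Fin 3)) (hC : Trifferent C)
    (hd : 2 ≤ d) (hdn : d ≤ n - 1)
    (hns : ¬ ∀ w : Fin d → Fin 3, ∃ c ∈ C,
      (fun i : Fin d => c (Fin.castLE (le_trans hdn (Nat.sub_le n 1)) i)) = w) :
    2 ^ d * C.ncard ≤ T (n - d) * (3 ^ d - 1) := by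
  push_neg at hns
  obtain ⟨w, hw⟩ := hns
  have h : d ≤ n := le_trans hdn (Nat.sub_le n 1)
  have hdn' : d < n := by omega
  have hCfin : C.Finite := Set.toFinite C
  set CF := hCfin.toFinset with hCF
  have hmemCF : ∀ c, c ∈ CF ↔ c ∈ C := fun c => hCfin.mem_toFinset
  have hncard : C.ncard = CF.card := Set.ncard_eq_toFinset_card C hCfin
  set O : Finset (Fin d → Fin 3) := univ.filter (fun u => Odd (agr w u)) with hO
  have hstep1 : ∑ u ∈ O, (CF.filter fun c => ∀ i, u i ≠ c (Fin.castLE h i)).card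
      = CF.card * 2 ^ (d - 1) := by
    calc ∑ u ∈ O, (CF.filter fun c => ∀ i, u i ≠ c (Fin.castLE h i)).card
        = ∑ u ∈ O, ∑ c ∈ CF, if (∀ i, u i ≠ c (Fin.castLE h i)) then 1 else 0 := by
          refine Finset.sum_congr rfl fun u _ => ?_
          rw [Finset.card_filter]
      _ = ∑ c ∈ CF, ∑ u ∈ O, if (∀ i, u i ≠ c (Fin.castLE h i)) then 1 else 0 :=
          Finset.sum_comm
      _ = ∑ _c ∈ CF, (2:ℕ) ^ (d - 1) := by
          refine Finset.sum_congr rfl fun c hc => ?_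
          rw [← Finset.card_filter]
          exact odd_card_restricted (by omega) w (fun i => c (Fin.castLE h i))
            (hw c ((hmemCF c).mp hc))
      _ = CF.card * 2 ^ (d - 1) := by rw [Finset.sum_const, smul_eq_mul]
  have hstep2 : ∀ u ∈ O, (CF.filter fun c => ∀ i, u i ≠ c (Fin.castLE h i)).card ≤ T (n - d) := by
    intro u _
    have hset : {c ∈ C | ∀ i, u i ≠ c (Fin.castLE h i)}
        = ↑(CF.filter fun c => ∀ i, u i ≠ c (Fin.castLE h i)) := by
      ext c
      simp [hmemCF c]
    have hb := subcube_le hdn' hC h u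
    rw [hset, Set.ncard_coe_finset] at hb
    exact hb
  have hOcard := odd_card_all w
  obtain ⟨e, he⟩ : ∃ e, d = e + 1 := ⟨d - 1, (Nat.sub_add_cancel (le_trans one_le_two hd)).symm⟩
  have hpow : (2:ℕ) ^ d = 2 * 2 ^ (d - 1) := by
    rw [he, pow_succ, Nat.add_sub_cancel]; ring
  calc 2 ^ d * C.ncard = 2 * (CF.card * 2 ^ (d - 1)) := by rw [hncard, hpow]; ring
    _ = 2 * ∑ u ∈ O, (CF.filter fun c => ∀ i, u i ≠ c (Fin.castLE h i)).card := by rw [hstep1]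
    _ ≤ 2 * ∑ _u ∈ O, T (n - d) := by
        exact Nat.mul_le_mul_left 2 (Finset.sum_le_sum hstep2)
    _ = 2 * (O.card * T (n - d)) := by rw [Finset.sum_const, smul_eq_mul]
    _ = (2 * O.card) * T (n - d) := by ring
    _ = (3 ^ d - 1) * T (n - d) := by rw [hOcard]
    _ = T (n - d) * (3 ^ d - 1) := Nat.mul_comm _ _
end

section
/- If a trifferent code C of length n contains two codewords at Hamming distance d with 2 ≤ d ≤ n−1, then 2^d · #C ≤ T(n−d) · (3^d − 1), i.e., #C ≤ T(n−d) · (3^d − 1)/2^d. -/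
open Finset

def third (a b : Fin 3) : Fin 3 := ⟨(6 - a.val - b.val) % 3, Nat.mod_lt _ (by omega)⟩
lemma third_ne_left : ∀ a b : Fin 3, a ≠ b → third a b ≠ a := by decide
lemma third_ne_right : ∀ a b : Fin 3, a ≠ b → third a b ≠ b := by decide
lemma eq_third : ∀ a b c : Fin 3, a ≠ b → c ≠ a → c ≠ b → c = third a b := by decide
lemma fin3_mem : ∀ a b c v : Fin 3, a ≠ b → a ≠ c → b ≠ c → v = a ∨ v = b ∨ v = c := by decide

lemma ncard_le_T (m : ℕ) (C₀ : Set (Fin m → Fin 3)) (h : Trifferent C₀) : C₀.ncard ≤ T m := by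
  apply le_csSup
  · refine ⟨Fintype.card (Fin m → Fin 3), ?_⟩
    rintro k ⟨C₁, -, rfl⟩
    calc C₁.ncard ≤ (Set.univ : Set (Fin m → Fin 3)).ncard :=
          Set.ncard_le_ncard (Set.subset_univ C₁) (Set.toFinite _)
      _ = Fintype.card (Fin m → Fin 3) := by rw [Set.ncard_univ, Nat.card_eq_fintype_card]
  · exact ⟨C₀, h, rfl⟩

lemma two_le_T_s8 (m : ℕ) (hm : 1 ≤ m) : 2 ≤ T m := by
  have hne : (fun _ : Fin m => (0 : Fin 3)) ≠ (fun _ : Fin m => (1 : Fin 3)) := by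
    intro h
    have := congrFun h ⟨0, by omega⟩
    exact absurd this (by decide)
  have htr : Trifferent ({fun _ => 0, fun _ => 1} : Set (Fin m → Fin 3)) := by
    rintro a ha b hb c hc hab hac hbc
    simp only [Set.mem_insert_iff, Set.mem_singleton_iff] at ha hb hc
    rcases ha with rfl | rfl <;> rcases hb with rfl | rfl <;> rcases hc with rfl | rfl <;>
      simp_all
  have h2 : ({fun _ => 0, fun _ => 1} : Set (Fin m → Fin 3)).ncard = 2 :=
    Set.ncard_pair hne
  calc 2 = _ := h2.symm
    _ ≤ T m := ncard_le_T m _ htr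

section
variable {n : ℕ}

def avoidP (D : Finset (Fin n)) (q : {i // i ∈ D} → Fin 3) (z : Fin n → Fin 3) : Prop :=
  ∀ i : {i // i ∈ D}, z i.1 ≠ q i

instance (D : Finset (Fin n)) (q : {i // i ∈ D} → Fin 3) (z : Fin n → Fin 3) :
    Decidable (avoidP D q z) :=
  inferInstanceAs (Decidable (∀ i : {i // i ∈ D}, z i.1 ≠ q i))

def tpat (x y : Fin n → Fin 3) (D : Finset (Fin n)) : {i // i ∈ D} → Fin 3 :=
  fun i => third (x i.1) (y i.1)

def sv (x y : Fin n → Fin 3) (D : Finset (Fin n)) (s : Fin 3) (i : {i // i ∈ D}) : Fin 3 :=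
  if s = 0 then x i.1 else if s = 1 then y i.1 else third (x i.1) (y i.1)

def wpat (x y : Fin n → Fin 3) (D : Finset (Fin n)) (i1 i2 : {i // i ∈ D})
    (p : Fin 3 × Fin 3) : {i // i ∈ D} → Fin 3 :=
  fun i => if i = i1 then sv x y D p.1 i else if i = i2 then sv x y D p.2 i else tpat x y D i

def plusSet : Finset (Fin 3 × Fin 3) := {(0,0),(1,1),(0,2),(2,1)}
def minusSet : Finset (Fin 3 × Fin 3) := {(0,1),(1,0),(2,0),(1,2)}

lemma key1 : ∀ a b : Fin 3, a = b → a ≠ 2 →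
    (minusSet.filter (fun p => p.1 ≠ a ∧ p.2 ≠ b)).card + 1 ≤
    (plusSet.filter (fun p => p.1 ≠ a ∧ p.2 ≠ b)).card := by decide

lemma key2 : ∀ a b : Fin 3, a = 2 ∨ b = 2 →
    (minusSet.filter (fun p => p.1 ≠ a ∧ p.2 ≠ b)).card ≤
    (plusSet.filter (fun p => p.1 ≠ a ∧ p.2 ≠ b)).card := by decide

lemma sv_inj (x y : Fin n → Fin 3) (D : Finset (Fin n)) (i : {i // i ∈ D})
    (hxy : x i.1 ≠ y i.1) :
    ∀ s s' : Fin 3, sv x y D s i = sv x y D s' i → s = s' := by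
  have h1 := third_ne_left (x i.1) (y i.1) hxy
  have h2 := third_ne_right (x i.1) (y i.1) hxy
  intro s s' h
  fin_cases s <;> fin_cases s' <;> simp [sv] at h <;>
    first
      | rfl
      | exact absurd h hxy
      | exact absurd h.symm hxy
      | exact absurd h.symm h1
      | exact absurd h h1
      | exact absurd h.symm h2
      | exact absurd h h2

lemma card_avoid (D : Finset (Fin n)) (z : Fin n → Fin 3) :
    (univ.filter (fun q : {i // i ∈ D} → Fin 3 => avoidP D q z)).card = 2 ^ D.card := by
  have he : univ.filter (fun q : {i // i ∈ D} → Fin 3 => avoidP D q z)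
      = Fintype.piFinset (fun i : {i // i ∈ D} => univ.erase (z i.1)) := by
    ext q
    simp only [mem_filter, mem_univ, true_and, Fintype.mem_piFinset, mem_erase]
    constructor
    · intro h i; exact ⟨fun hc => h i hc.symm, trivial⟩
    · intro h i hc; exact (h i).1 hc.symm
  rw [he, Fintype.card_piFinset]
  have h2 : ∀ i : {i // i ∈ D}, (univ.erase (z i.1)).card = 2 := by
    intro i
    rw [card_erase_of_mem (mem_univ _), card_univ]
    rfl
  rw [Finset.prod_congr rfl (fun i _ => h2 i), Finset.prod_const, card_univ,
    Fintype.card_coe]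

/-- The key projection bound. -/
lemma proj_bound {m : ℕ} (C : Set (Fin n → Fin 3)) (hC : Trifferent C)
    (D : Finset (Fin n)) (hm : Dᶜ.card = m) (hm1 : 1 ≤ m)
    (F : Finset (Fin n → Fin 3)) (hF : ∀ z, z ∈ F ↔ z ∈ C)
    (q : {i // i ∈ D} → Fin 3) :
    (F.filter (fun z => avoidP D q z)).card ≤ T m := by
  classical
  have hcard : Fintype.card {i // i ∈ Dᶜ} = m := by
    rw [Fintype.card_coe]; exact hm
  let e : {i // i ∈ Dᶜ} ≃ Fin m := Fintype.equivFinOfCardEq hcard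
  let π : (Fin n → Fin 3) → (Fin m → Fin 3) := fun z j => z (e.symm j).1
  set S := F.filter (fun z => avoidP D q z) with hS
  have hSC : ∀ z ∈ S, z ∈ C := fun z hz => (hF z).1 (mem_filter.mp hz).1
  have hSq : ∀ z ∈ S, ∀ i : {i // i ∈ D}, z i.1 ≠ q i := fun z hz => (mem_filter.mp hz).2
  have hπeq : ∀ z w : Fin n → Fin 3, π z = π w → ∀ i ∉ D, z i = w i := by
    intro z w h i hi
    have hi' : i ∈ Dᶜ := Finset.mem_compl.mpr hi
    have := congrFun h (e ⟨i, hi'⟩)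
    simpa [π, Equiv.symm_apply_apply] using this
  have hnotD : ∀ z ∈ S, ∀ w ∈ S, ∀ u ∈ S, ∀ i : Fin n,
      z i ≠ w i → z i ≠ u i → w i ≠ u i → i ∉ D := by
    intro z hz w hw u hu i h1 h2 h3 hiD
    rcases fin3_mem (z i) (w i) (u i) (q ⟨i, hiD⟩) h1 h2 h3 with h | h | h
    · exact hSq z hz ⟨i, hiD⟩ h.symm
    · exact hSq w hw ⟨i, hiD⟩ h.symm
    · exact hSq u hu ⟨i, hiD⟩ h.symm
  by_cases hinj : ∀ z ∈ S, ∀ w ∈ S, π z = π w → z = w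
  · have hinj' : Set.InjOn π (S : Set (Fin n → Fin 3)) := fun z hz w hw h =>
      hinj z (by simpa using hz) w (by simpa using hw) h
    set C₀ : Set (Fin m → Fin 3) := π '' (S : Set (Fin n → Fin 3)) with hC₀
    have htr : Trifferent C₀ := by
      rintro a ⟨za, hza, rfl⟩ b ⟨zb, hzb, rfl⟩ c ⟨zc, hzc, rfl⟩ hab hac hbc
      have hzab : za ≠ zb := fun h => hab (by rw [h])
      have hzac : za ≠ zc := fun h => hac (by rw [h])
      have hzbc : zb ≠ zc := fun h => hbc (by rw [h])
      have hza' : za ∈ S := by simpa using hza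
      have hzb' : zb ∈ S := by simpa using hzb
      have hzc' : zc ∈ S := by simpa using hzc
      obtain ⟨i, h1, h2, h3⟩ := hC za (hSC za hza') zb (hSC zb hzb') zc (hSC zc hzc')
        hzab hzac hzbc
      have hiD : i ∉ D := hnotD za hza' zb hzb' zc hzc' i h1 h2 h3
      have hi' : i ∈ Dᶜ := Finset.mem_compl.mpr hiD
      refine ⟨e ⟨i, hi'⟩, ?_, ?_, ?_⟩ <;>
        simpa [π, Equiv.symm_apply_apply] using by assumption
    have hcard₀ : C₀.ncard = S.card := by
      rw [hC₀, Set.ncard_image_of_injOn hinj', Set.ncard_coe_finset]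
    calc S.card = C₀.ncard := hcard₀.symm
      _ ≤ T m := ncard_le_T m C₀ htr
  · push_neg at hinj
    obtain ⟨z, hz, w, hw, hπzw, hzw⟩ := hinj
    have hsub : S ⊆ {z, w} := by
      intro u hu
      by_contra hun
      simp only [mem_insert, mem_singleton, not_or] at hun
      obtain ⟨huz, huw⟩ := hun
      obtain ⟨i, h1, h2, h3⟩ := hC z (hSC z hz) w (hSC w hw) u (hSC u hu)
        hzw (Ne.symm huz) (Ne.symm huw)
      have hiD : i ∉ D := hnotD z hz w hw u hu i h1 h2 h3
      exact h1 (hπeq z w hπzw i hiD)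
    calc S.card ≤ ({z, w} : Finset _).card := Finset.card_le_card hsub
      _ ≤ 2 := Finset.card_insert_le _ _ |>.trans (by simp)
      _ ≤ T m := two_le_T_s8 m hm1

lemma perz (C : Set (Fin n → Fin 3)) (hC : Trifferent C)
    (x y : Fin n → Fin 3) (hx : x ∈ C) (hy : y ∈ C)
    (D : Finset (Fin n)) (hD : ∀ i, i ∈ D ↔ x i ≠ y i)
    (i1 i2 : {i // i ∈ D}) (h12 : i1 ≠ i2)
    (z : Fin n → Fin 3) (hz : z ∈ C) :
    2 ^ D.card + ∑ p ∈ minusSet, (if avoidP D (wpat x y D i1 i2 p) z then 1 else 0) ≤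
      ((univ.erase (tpat x y D)).filter (fun q => avoidP D q z)).card +
      ∑ p ∈ plusSet, (if avoidP D (wpat x y D i1 i2 p) z then 1 else 0) := by
  have hxyD : ∀ i : {i // i ∈ D}, x i.1 ≠ y i.1 := fun i => (hD i.1).1 i.2
  have hxy : x ≠ y := fun h => hxyD i1 (by rw [h])
  have hfilter : (univ.erase (tpat x y D)).filter (fun q => avoidP D q z)
      = (univ.filter (fun q => avoidP D q z)).erase (tpat x y D) := by
    ext q
    simp only [mem_filter, mem_erase, mem_univ, true_and]
    tauto
  have hw1 : ∀ p : Fin 3 × Fin 3, wpat x y D i1 i2 p i1 = sv x y D p.1 i1 :=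
    fun p => by simp [wpat]
  have hw2 : ∀ p : Fin 3 × Fin 3, wpat x y D i1 i2 p i2 = sv x y D p.2 i2 :=
    fun p => by simp [wpat, h12.symm]
  have hw3 : ∀ (p : Fin 3 × Fin 3) i, i ≠ i1 → i ≠ i2 → wpat x y D i1 i2 p i = tpat x y D i :=
    fun p i hi1 hi2 => by simp [wpat, hi1, hi2]
  have htsv : ∀ j, tpat x y D j = sv x y D 2 j := fun j => by simp [sv, tpat]
  have hpow : 0 < 2 ^ D.card := pow_pos (by norm_num) _
  by_cases htail : ∀ i : {i // i ∈ D}, i ≠ i1 → i ≠ i2 → z i.1 ≠ tpat x y D i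
  · set σ : {i // i ∈ D} → Fin 3 :=
      fun j => if z j.1 = x j.1 then 0 else if z j.1 = y j.1 then 1 else 2 with hσ
    have hsv : ∀ j, sv x y D (σ j) j = z j.1 := by
      intro j
      by_cases h1 : z j.1 = x j.1
      · simp [hσ, h1, sv]
      · by_cases h2 : z j.1 = y j.1
        · simp [hσ, h1, h2, sv, (hxyD j).symm]
        · have h3 : z j.1 = third (x j.1) (y j.1) := eq_third _ _ _ (hxyD j) h1 h2
          simp [hσ, h1, h2, sv, h3, third_ne_left _ _ (hxyD j), third_ne_right _ _ (hxyD j)]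
    have hsvne : ∀ s j, sv x y D s j ≠ z j.1 ↔ s ≠ σ j := by
      intro s j
      constructor
      · intro h hc; exact h (hc ▸ hsv j)
      · intro h hc; exact h (sv_inj x y D j (hxyD j) _ _ (hc.trans (hsv j).symm))
    have havoid : ∀ p : Fin 3 × Fin 3,
        avoidP D (wpat x y D i1 i2 p) z ↔ (p.1 ≠ σ i1 ∧ p.2 ≠ σ i2) := by
      intro p
      constructor
      · intro h
        refine ⟨(hsvne p.1 i1).mp ?_, (hsvne p.2 i2).mp ?_⟩
        · rw [← hw1 p]; exact (h i1).symm
        · rw [← hw2 p]; exact (h i2).symm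
      · rintro ⟨h1, h2⟩ i
        by_cases e1 : i = i1
        · subst e1; rw [hw1 p]; exact ((hsvne p.1 i).mpr h1).symm
        · by_cases e2 : i = i2
          · subst e2; rw [hw2 p]; exact ((hsvne p.2 i).mpr h2).symm
          · rw [hw3 p i e1 e2]; exact htail i e1 e2
    have htpat : avoidP D (tpat x y D) z ↔ (σ i1 ≠ 2 ∧ σ i2 ≠ 2) := by
      constructor
      · intro h
        refine ⟨Ne.symm ((hsvne 2 i1).mp ?_), Ne.symm ((hsvne 2 i2).mp ?_)⟩
        · rw [← htsv]; exact (h i1).symm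
        · rw [← htsv]; exact (h i2).symm
      · rintro ⟨h1, h2⟩ i
        by_cases e1 : i = i1
        · subst e1; rw [htsv]; exact ((hsvne 2 i).mpr (Ne.symm h1)).symm
        · by_cases e2 : i = i2
          · subst e2; rw [htsv]; exact ((hsvne 2 i).mpr (Ne.symm h2)).symm
          · exact htail i e1 e2
    have hconstraint : (σ i1 = σ i2 ∧ σ i1 ≠ 2) ∨ σ i1 = 2 ∨ σ i2 = 2 := by
      by_cases hzx : z = x
      · have h0 : ∀ j, σ j = 0 := fun j => by simp [hσ, hzx]
        left; rw [h0 i1, h0 i2]; exact ⟨rfl, by decide⟩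
      · by_cases hzy : z = y
        · have h1 : ∀ j, σ j = 1 := fun j => by
            have := (hxyD j).symm
            simp [hσ, hzy, this]
          left; rw [h1 i1, h1 i2]; exact ⟨rfl, by decide⟩
        · obtain ⟨i, hxyi, hxzi, hyzi⟩ := hC x hx y hy z hz hxy
            (fun h => hzx h.symm) (fun h => hzy h.symm)
          have hiD : i ∈ D := (hD i).2 hxyi
          have h3 : z i = third (x i) (y i) := eq_third _ _ _ hxyi (Ne.symm hxzi) (Ne.symm hyzi)
          have hσ2 : σ ⟨i, hiD⟩ = 2 := by
            have hne1 : z i ≠ x i := by rw [h3]; exact third_ne_left _ _ hxyi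
            have hne2 : z i ≠ y i := by rw [h3]; exact third_ne_right _ _ hxyi
            simp [hσ, hne1, hne2]
          have hor : (⟨i, hiD⟩ : {i // i ∈ D}) = i1 ∨ (⟨i, hiD⟩ : {i // i ∈ D}) = i2 := by
            by_contra hc
            push_neg at hc
            exact htail ⟨i, hiD⟩ hc.1 hc.2 h3
          rcases hor with h | h
          · right; left; rw [← h]; exact hσ2
          · right; right; rw [← h]; exact hσ2
    have hmsum : ∑ p ∈ minusSet, (if avoidP D (wpat x y D i1 i2 p) z then 1 else 0)
        = (minusSet.filter (fun p => p.1 ≠ σ i1 ∧ p.2 ≠ σ i2)).card := by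
      rw [Finset.card_filter]
      refine Finset.sum_congr rfl (fun p _ => ?_)
      by_cases h : avoidP D (wpat x y D i1 i2 p) z
      · rw [if_pos h, if_pos ((havoid p).1 h)]
      · rw [if_neg h, if_neg (fun hc => h ((havoid p).2 hc))]
    have hpsum : ∑ p ∈ plusSet, (if avoidP D (wpat x y D i1 i2 p) z then 1 else 0)
        = (plusSet.filter (fun p => p.1 ≠ σ i1 ∧ p.2 ≠ σ i2)).card := by
      rw [Finset.card_filter]
      refine Finset.sum_congr rfl (fun p _ => ?_)
      by_cases h : avoidP D (wpat x y D i1 i2 p) z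
      · rw [if_pos h, if_pos ((havoid p).1 h)]
      · rw [if_neg h, if_neg (fun hc => h ((havoid p).2 hc))]
    by_cases hts : σ i1 ≠ 2 ∧ σ i2 ≠ 2
    · have hmem : tpat x y D ∈ univ.filter (fun q => avoidP D q z) :=
        mem_filter.mpr ⟨mem_univ _, htpat.mpr hts⟩
      rw [hfilter, card_erase_of_mem hmem, card_avoid, hmsum, hpsum]
      have heq : σ i1 = σ i2 ∧ σ i1 ≠ 2 := by
        rcases hconstraint with h | h | h
        · exact h
        · exact absurd h hts.1
        · exact absurd h hts.2
      have := key1 (σ i1) (σ i2) heq.1 heq.2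
      omega
    · have hnmem : tpat x y D ∉ univ.filter (fun q => avoidP D q z) :=
        fun hc => hts (htpat.mp (mem_filter.mp hc).2)
      rw [hfilter, Finset.erase_eq_of_notMem hnmem, card_avoid, hmsum, hpsum]
      have h2 : σ i1 = 2 ∨ σ i2 = 2 := by
        by_cases hc : σ i1 = 2
        · exact Or.inl hc
        · right
          by_contra hc2
          exact hts ⟨hc, hc2⟩
      have := key2 (σ i1) (σ i2) h2
      omega
  · push_neg at htail
    obtain ⟨i, hi1, hi2, heq⟩ := htail
    have hmzero : ∑ p ∈ minusSet, (if avoidP D (wpat x y D i1 i2 p) z then 1 else 0) = 0 :=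
      Finset.sum_eq_zero fun p _ => by
        rw [if_neg]
        exact fun hav => (hav i) (heq.trans (hw3 p i hi1 hi2).symm)
    have hnmem : tpat x y D ∉ univ.filter (fun q => avoidP D q z) :=
      fun hc => ((mem_filter.mp hc).2 i) heq
    rw [hfilter, Finset.erase_eq_of_notMem hnmem, card_avoid, hmzero]
    omega

end

theorem pair_distance_bound {n d : ℕ} (C : Set (Fin n → Fin 3)) (hC : Trifferent C)
    (hd : 2 ≤ d) (hdn : d ≤ n - 1)
    (x : Fin n → Fin 3) (hx : x ∈ C) (y : Fin n → Fin 3) (hy : y ∈ C)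
    (hxy : hammingDist x y = d) :
    2 ^ d * C.ncard ≤ T (n - d) * (3 ^ d - 1) := by
  classical
  have hn : d + 1 ≤ n := by omega
  have hm1 : 1 ≤ n - d := by omega
  set D : Finset (Fin n) := univ.filter (fun i => x i ≠ y i) with hDdef
  have hD : ∀ i, i ∈ D ↔ x i ≠ y i := fun i => by simp [hDdef]
  have hDd : D.card = d := hxy
  have hDc : Dᶜ.card = n - d := by rw [Finset.card_compl, hDd, Fintype.card_fin]
  have h1lt : 1 < D.card := by omega
  obtain ⟨a, ha, b, hb, hab⟩ := Finset.one_lt_card.mp h1lt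
  set i1 : {i // i ∈ D} := ⟨a, ha⟩ with hi1def
  set i2 : {i // i ∈ D} := ⟨b, hb⟩ with hi2def
  have h12 : i1 ≠ i2 := fun h => hab (congrArg Subtype.val h)
  have hxyD : ∀ i : {i // i ∈ D}, x i.1 ≠ y i.1 := fun i => (hD i.1).1 i.2
  set F : Finset (Fin n → Fin 3) := (Set.toFinite C).toFinset with hFdef
  have hF : ∀ z, z ∈ F ↔ z ∈ C := fun z => Set.Finite.mem_toFinset _
  have hFC : C.ncard = F.card := Set.ncard_eq_toFinset_card C (Set.toFinite C)
  have hsum := Finset.sum_le_sum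
    (fun z hz => perz C hC x y hx hy D hD i1 i2 h12 z ((hF z).1 hz))
  rw [Finset.sum_add_distrib, Finset.sum_add_distrib, Finset.sum_const, smul_eq_mul] at hsum
  have hswapM : ∑ z ∈ F, ∑ p ∈ minusSet, (if avoidP D (wpat x y D i1 i2 p) z then 1 else 0)
      = ∑ p ∈ minusSet, (F.filter (fun z => avoidP D (wpat x y D i1 i2 p) z)).card := by
    rw [Finset.sum_comm]
    exact Finset.sum_congr rfl fun p _ => (Finset.card_filter _ _).symm
  have hswapP : ∑ z ∈ F, ∑ p ∈ plusSet, (if avoidP D (wpat x y D i1 i2 p) z then 1 else 0)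
      = ∑ p ∈ plusSet, (F.filter (fun z => avoidP D (wpat x y D i1 i2 p) z)).card := by
    rw [Finset.sum_comm]
    exact Finset.sum_congr rfl fun p _ => (Finset.card_filter _ _).symm
  have hswapQ : ∑ z ∈ F, ((univ.erase (tpat x y D)).filter (fun q => avoidP D q z)).card
      = ∑ q ∈ univ.erase (tpat x y D), (F.filter (fun z => avoidP D q z)).card := by
    simp only [Finset.card_filter]
    exact Finset.sum_comm
  set MP : Finset ({i // i ∈ D} → Fin 3) := minusSet.image (wpat x y D i1 i2) with hMP
  have hwne : ∀ p ∈ minusSet, wpat x y D i1 i2 p ≠ tpat x y D := by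
    intro p hp
    fin_cases hp
    · intro h
      have hwx1 : wpat x y D i1 i2 (0,1) i1 = x i1.1 := by simp [wpat, sv]
      exact third_ne_left _ _ (hxyD i1) ((congrFun h i1).symm.trans hwx1)
    · intro h
      have hwy1 : wpat x y D i1 i2 (1,0) i1 = y i1.1 := by simp [wpat, sv]
      exact third_ne_right _ _ (hxyD i1) ((congrFun h i1).symm.trans hwy1)
    · intro h
      have hwx2 : wpat x y D i1 i2 (2,0) i2 = x i2.1 := by simp [wpat, sv, h12.symm]
      exact third_ne_left _ _ (hxyD i2) ((congrFun h i2).symm.trans hwx2)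
    · intro h
      have hwy1 : wpat x y D i1 i2 (1,2) i1 = y i1.1 := by simp [wpat, sv]
      exact third_ne_right _ _ (hxyD i1) ((congrFun h i1).symm.trans hwy1)
  have hsubMP : MP ⊆ univ.erase (tpat x y D) := by
    intro q hq
    obtain ⟨p, hp, rfl⟩ := Finset.mem_image.mp hq
    exact Finset.mem_erase.mpr ⟨hwne p hp, mem_univ _⟩
  have hinjMP : ∀ p ∈ minusSet, ∀ p' ∈ minusSet,
      wpat x y D i1 i2 p = wpat x y D i1 i2 p' → p = p' := by
    intro p _ p' _ h
    have h1 : sv x y D p.1 i1 = sv x y D p'.1 i1 := by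
      have := congrFun h i1
      simpa [wpat] using this
    have h2 : sv x y D p.2 i2 = sv x y D p'.2 i2 := by
      have := congrFun h i2
      simpa [wpat, h12.symm] using this
    exact Prod.ext (sv_inj x y D i1 (hxyD i1) _ _ h1) (sv_inj x y D i2 (hxyD i2) _ _ h2)
  have hMPcard : MP.card = 4 := by
    rw [hMP, Finset.card_image_of_injOn hinjMP]
    decide
  have hsplit : ∑ q ∈ (univ.erase (tpat x y D)) \ MP, (F.filter (fun z => avoidP D q z)).card
      + ∑ q ∈ MP, (F.filter (fun z => avoidP D q z)).card
      = ∑ q ∈ univ.erase (tpat x y D), (F.filter (fun z => avoidP D q z)).card :=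
    Finset.sum_sdiff hsubMP
  have himg : ∑ q ∈ MP, (F.filter (fun z => avoidP D q z)).card
      = ∑ p ∈ minusSet, (F.filter (fun z => avoidP D (wpat x y D i1 i2 p) z)).card := by
    rw [hMP]
    exact Finset.sum_image hinjMP
  have hTb : ∀ q : {i // i ∈ D} → Fin 3,
      (F.filter (fun z => avoidP D q z)).card ≤ T (n - d) :=
    fun q => proj_bound C hC D hDc hm1 F hF q
  have hb1 : ∑ q ∈ (univ.erase (tpat x y D)) \ MP, (F.filter (fun z => avoidP D q z)).card
      ≤ ((univ.erase (tpat x y D)) \ MP).card * T (n - d) := by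
    calc _ ≤ ((univ.erase (tpat x y D)) \ MP).card • T (n - d) :=
          Finset.sum_le_card_nsmul _ _ _ (fun q _ => hTb q)
      _ = _ := by rw [smul_eq_mul]
  have hb2 : ∑ p ∈ plusSet, (F.filter (fun z => avoidP D (wpat x y D i1 i2 p) z)).card
      ≤ 4 * T (n - d) := by
    calc _ ≤ plusSet.card • T (n - d) :=
          Finset.sum_le_card_nsmul _ _ _ (fun p _ => hTb _)
      _ = 4 * T (n - d) := by
          rw [smul_eq_mul, show plusSet.card = 4 from by decide]
  have hcard_univ : (univ : Finset ({i // i ∈ D} → Fin 3)).card = 3 ^ d := by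
    rw [card_univ, Fintype.card_fun, Fintype.card_coe, hDd, Fintype.card_fin]
  have hcard_erase : (univ.erase (tpat x y D)).card = 3 ^ d - 1 := by
    rw [card_erase_of_mem (mem_univ _), hcard_univ]
  have hcard_sdiff : ((univ.erase (tpat x y D)) \ MP).card = 3 ^ d - 1 - 4 := by
    rw [Finset.card_sdiff_of_subset hsubMP, hcard_erase, hMPcard]
  have h9 : 9 ≤ 3 ^ d := by
    calc (9:ℕ) = 3 ^ 2 := rfl
      _ ≤ 3 ^ d := Nat.pow_le_pow_right (by norm_num) hd
  rw [hswapM, hswapP, hswapQ, ← hsplit, himg, hDd] at hsum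
  have hmain : F.card * 2 ^ d ≤ (3 ^ d - 1 - 4) * T (n - d) + 4 * T (n - d) := by
    rw [hcard_sdiff] at hb1
    omega
  have hfin : (3 ^ d - 1 - 4) * T (n - d) + 4 * T (n - d) = (3 ^ d - 1) * T (n - d) := by
    rw [← add_mul]
    congr 1
    omega
  calc 2 ^ d * C.ncard = F.card * 2 ^ d := by rw [hFC, mul_comm]
    _ ≤ (3 ^ d - 1) * T (n - d) := hmain.trans (le_of_eq hfin)
    _ = T (n - d) * (3 ^ d - 1) := mul_comm _ _
end

section
/- For every n ≥ 2 we have T(n) ≤ ⌊3 · T(n−1) / 2⌋. -/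
namespace TrifAux

/-- Drop the first coordinate. -/
def proj {n : ℕ} (x : Fin (n+1) → Fin 3) : Fin n → Fin 3 := fun i => x i.succ

lemma bdd (n : ℕ) :
    BddAbove {m | ∃ C : Set (Fin n → Fin 3), Trifferent C ∧ C.ncard = m} := by
  refine ⟨Nat.card (Fin n → Fin 3), ?_⟩
  rintro m ⟨C, -, rfl⟩
  calc C.ncard ≤ (Set.univ : Set (Fin n → Fin 3)).ncard :=
        Set.ncard_le_ncard (Set.subset_univ C) (Set.toFinite _)
    _ = Nat.card (Fin n → Fin 3) := Set.ncard_univ _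

lemma ncard_le_T {n : ℕ} {C : Set (Fin n → Fin 3)} (h : Trifferent C) :
    C.ncard ≤ T n :=
  le_csSup (bdd n) ⟨C, h, rfl⟩

lemma T_attained (n : ℕ) :
    ∃ C : Set (Fin n → Fin 3), Trifferent C ∧ C.ncard = T n := by
  have h0 : (0 : ℕ) ∈ {m | ∃ C : Set (Fin n → Fin 3), Trifferent C ∧ C.ncard = m} :=
    ⟨∅, fun x hx => absurd hx (Set.notMem_empty x), Set.ncard_empty _⟩
  have := Nat.sSup_mem ⟨0, h0⟩ (bdd n)
  exact this

lemma three_le_T {n : ℕ} (hn : 1 ≤ n) : 3 ≤ T n := by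
  set C : Set (Fin n → Fin 3) :=
    {(fun _ => 0), (fun _ => 1), (fun _ => 2)} with hCdef
  have hconst : ∀ x ∈ C, ∀ j j' : Fin n, x j = x j' := by
    rintro x (rfl | rfl | rfl) j j' <;> rfl
  have i : Fin n := ⟨0, hn⟩
  have hdiff : ∀ x ∈ C, ∀ y ∈ C, x ≠ y → x i ≠ y i := by
    intro x hx y hy hxy h
    apply hxy
    funext j
    calc x j = x i := hconst x hx j i
      _ = y i := h
      _ = y j := hconst y hy i j
  have htr : Trifferent C := by
    intro x hx y hy z hz hxy hxz hyz
    exact ⟨i, hdiff x hx y hy hxy, hdiff x hx z hz hxz, hdiff y hy z hz hyz⟩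
  have hcard : C.ncard = 3 := by
    have h01 : (fun _ => 0 : Fin n → Fin 3) ≠ fun _ => 1 := by
      intro h; exact absurd (congrFun h i) (by decide)
    have h02 : (fun _ => 0 : Fin n → Fin 3) ≠ fun _ => 2 := by
      intro h; exact absurd (congrFun h i) (by decide)
    have h12 : (fun _ => 1 : Fin n → Fin 3) ≠ fun _ => 2 := by
      intro h; exact absurd (congrFun h i) (by decide)
    rw [hCdef, Set.ncard_insert_of_notMem (by simp [h01, h02]) (Set.toFinite _),
      Set.ncard_pair h12]
  calc (3 : ℕ) = C.ncard := hcard.symm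
    _ ≤ T n := ncard_le_T htr

lemma ext0 {n : ℕ} {u v : Fin (n+1) → Fin 3} (h0 : u 0 = v 0)
    (hp : proj u = proj v) : u = v := by
  funext j
  rcases Fin.eq_zero_or_eq_succ j with rfl | ⟨i, rfl⟩
  · exact h0
  · exact congrFun hp i

lemma pigeon2 : ∀ a b u v w : Fin 3, (u = a ∨ u = b) → (v = a ∨ v = b) →
    (w = a ∨ w = b) → u ≠ v → u ≠ w → v ≠ w → False := by decide

lemma uniq3 : ∀ a b c d : Fin 3, a ≠ b → c ≠ a → c ≠ b → d ≠ a → d ≠ b → c = d := by decide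

lemma key {n : ℕ} (hn : 1 ≤ n) {C : Set (Fin (n+1) → Fin 3)} (hC : Trifferent C) :
    C.ncard ≤ 3 * T n / 2 := by
  have hT3 : 3 ≤ T n := three_le_T hn
  -- a pair with equal projection must differ in coordinate 0
  have diff0 : ∀ u v : Fin (n+1) → Fin 3, u ≠ v → proj u = proj v → u 0 ≠ v 0 :=
    fun u v huv hp h0 => huv (ext0 h0 hp)
  -- if u, v ∈ C have equal projections, every other codeword differs from both at coord 0
  have claim : ∀ u ∈ C, ∀ v ∈ C, u ≠ v → proj u = proj v →
      ∀ w ∈ C, w ≠ u → w ≠ v → w 0 ≠ u 0 ∧ w 0 ≠ v 0 := by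
    intro u hu v hv huv hp w hw hwu hwv
    obtain ⟨j, h1, h2, h3⟩ := hC u hu v hv w hw huv (Ne.symm hwu) (Ne.symm hwv)
    rcases Fin.eq_zero_or_eq_succ j with rfl | ⟨i, rfl⟩
    · exact ⟨Ne.symm h2, Ne.symm h3⟩
    · exact absurd (congrFun hp i) h1
  by_cases hinj : Set.InjOn proj C
  · -- injective case: split by first coordinate
    set Cl : Fin 3 → Set (Fin (n+1) → Fin 3) := fun a => {x ∈ C | x 0 = a} with hCl
    have hsub : ∀ a b : Fin 3, Cl a ∪ Cl b ⊆ C := by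
      rintro a b x (hx | hx) <;> exact hx.1
    have hdisj : ∀ a b : Fin 3, a ≠ b → Disjoint (Cl a) (Cl b) := by
      intro a b hab
      rw [Set.disjoint_left]
      rintro x ⟨-, hxa⟩ ⟨-, hxb⟩
      exact hab (hxa ▸ hxb)
    have hTab : ∀ a b : Fin 3, a ≠ b → (Cl a).ncard + (Cl b).ncard ≤ T n := by
      intro a b hab
      have htr : Trifferent (proj '' (Cl a ∪ Cl b)) := by
        rintro u ⟨x, hx, rfl⟩ v ⟨y, hy, rfl⟩ w ⟨z, hz, rfl⟩ huv huw hvw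
        have hxy : x ≠ y := fun h => huv (h ▸ rfl)
        have hxz : x ≠ z := fun h => huw (h ▸ rfl)
        have hyz : y ≠ z := fun h => hvw (h ▸ rfl)
        obtain ⟨j, h1, h2, h3⟩ := hC x (hsub a b hx) y (hsub a b hy) z (hsub a b hz) hxy hxz hyz
        rcases Fin.eq_zero_or_eq_succ j with rfl | ⟨i, rfl⟩
        · exfalso
          have hmem : ∀ t, t ∈ Cl a ∪ Cl b → t 0 = a ∨ t 0 = b := by
            rintro t (ht | ht)
            · exact Or.inl ht.2
            · exact Or.inr ht.2
          exact pigeon2 a b (x 0) (y 0) (z 0) (hmem x hx) (hmem y hy) (hmem z hz) h1 h2 h3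
        · exact ⟨i, h1, h2, h3⟩
      have hic : (proj '' (Cl a ∪ Cl b)).ncard = (Cl a).ncard + (Cl b).ncard := by
        rw [Set.ncard_image_of_injOn (hinj.mono (hsub a b)),
          Set.ncard_union_eq (hdisj a b hab) (Set.toFinite _) (Set.toFinite _)]
      calc (Cl a).ncard + (Cl b).ncard = (proj '' (Cl a ∪ Cl b)).ncard := hic.symm
        _ ≤ T n := ncard_le_T htr
    have hsum : (Cl 0).ncard + (Cl 1).ncard + (Cl 2).ncard = C.ncard := by
      have hCeq : C = Cl 0 ∪ Cl 1 ∪ Cl 2 := by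
        ext x
        constructor
        · intro hx
          have h3 : x 0 = 0 ∨ x 0 = 1 ∨ x 0 = 2 := by
            have : ∀ a : Fin 3, a = 0 ∨ a = 1 ∨ a = 2 := by decide
            exact this (x 0)
          rcases h3 with h | h | h
          · exact Or.inl (Or.inl ⟨hx, h⟩)
          · exact Or.inl (Or.inr ⟨hx, h⟩)
          · exact Or.inr ⟨hx, h⟩
        · rintro ((hx | hx) | hx) <;> exact hx.1
      rw [hCeq, Set.ncard_union_eq (by
          rw [Set.disjoint_union_left]
          exact ⟨hdisj 0 2 (by decide), hdisj 1 2 (by decide)⟩)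
        (Set.toFinite _) (Set.toFinite _),
        Set.ncard_union_eq (hdisj 0 1 (by decide)) (Set.toFinite _) (Set.toFinite _)]
    have h01 := hTab 0 1 (by decide)
    have h12 := hTab 1 2 (by decide)
    have h02 := hTab 0 2 (by decide)
    rw [Nat.le_div_iff_mul_le (by norm_num)]
    omega
  · -- there are two codewords with equal projections
    rw [Set.InjOn] at hinj
    push_neg at hinj
    obtain ⟨x, hx, y, hy, hpxy, hxy⟩ := hinj
    have hx0y0 : x 0 ≠ y 0 := diff0 x y hxy hpxy
    set D : Set (Fin (n+1) → Fin 3) := insert x (C \ {x, y}) with hD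
    have hDC : D ⊆ C := by
      rintro z (rfl | hz)
      · exact hx
      · exact hz.1
    -- every codeword other than x, y has the same coordinate 0 value
    have heq0 : ∀ z ∈ C \ {x, y}, ∀ z' ∈ C \ {x, y}, z 0 = z' 0 := by
      rintro z ⟨hz, hz'⟩ w ⟨hw, hw'⟩
      simp only [Set.mem_insert_iff, not_or] at hz' hw'
      obtain ⟨hz1, hz2⟩ := claim x hx y hy hxy hpxy z hz hz'.1 hz'.2
      obtain ⟨hw1, hw2⟩ := claim x hx y hy hxy hpxy w hw hw'.1 hw'.2
      exact uniq3 (x 0) (y 0) (z 0) (w 0) hx0y0 hz1 hz2 hw1 hw2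
    by_cases hinj2 : Set.InjOn proj D
    · -- the projection of D is trifferent; |C| ≤ |D| + 1 ≤ T n + 1
      have htr : Trifferent (proj '' D) := by
        rintro u ⟨p, hp, rfl⟩ v ⟨q, hq, rfl⟩ w ⟨r, hr, rfl⟩ huv huw hvw
        have hpq : p ≠ q := fun h => huv (h ▸ rfl)
        have hpr : p ≠ r := fun h => huw (h ▸ rfl)
        have hqr : q ≠ r := fun h => hvw (h ▸ rfl)
        obtain ⟨j, h1, h2, h3⟩ := hC p (hDC hp) q (hDC hq) r (hDC hr) hpq hpr hqr
        rcases Fin.eq_zero_or_eq_succ j with rfl | ⟨i, rfl⟩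
        · -- impossible: at most one of p,q,r is x, the others agree at 0
          exfalso
          rcases hp with rfl | hp
          · rcases hq with rfl | hq
            · exact hpq rfl
            · rcases hr with rfl | hr
              · exact hpr rfl
              · exact h3 (heq0 q hq r hr)
          · rcases hq with rfl | hq
            · rcases hr with rfl | hr
              · exact hqr rfl
              · exact h2 (heq0 p hp r hr)
            · exact h1 (heq0 p hp q hq)
        · exact ⟨i, h1, h2, h3⟩
      have hxny : x ∉ C \ {x, y} := by simp
      have hpair : ({x, y} : Set (Fin (n+1) → Fin 3)) ⊆ C := by
        rintro z (rfl | rfl); exacts [hx, hy]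
      have hcD : D.ncard = (C \ {x, y}).ncard + 1 :=
        Set.ncard_insert_of_notMem hxny (Set.toFinite _)
      have hcdiff : (C \ {x, y}).ncard = C.ncard - 2 := by
        rw [Set.ncard_diff hpair (Set.toFinite _), Set.ncard_pair hxy]
      have h2le : 2 ≤ C.ncard := by
        calc 2 = ({x, y} : Set (Fin (n+1) → Fin 3)).ncard := (Set.ncard_pair hxy).symm
          _ ≤ C.ncard := Set.ncard_le_ncard hpair (Set.toFinite _)
      have hDT : D.ncard ≤ T n := by
        calc D.ncard = (proj '' D).ncard := (Set.ncard_image_of_injOn hinj2).symm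
          _ ≤ T n := ncard_le_T htr
      rw [Nat.le_div_iff_mul_le (by norm_num)]
      omega
    · -- another colliding pair: C has at most 3 elements
      rw [Set.InjOn] at hinj2
      push_neg at hinj2
      obtain ⟨u, hu, v, hv, hpuv, huv⟩ := hinj2
      -- u, v ∈ D, u ≠ v, equal projections
      have huC := hDC hu
      have hvC := hDC hv
      have hu0v0 : u 0 ≠ v 0 := diff0 u v huv hpuv
      -- both u, v cannot be in C \ {x,y}
      have hkey : ∃ z ∈ C \ {x, y}, proj x = proj z ∧ x ≠ z := by
        rcases hu with rfl | hu
        · rcases hv with rfl | hv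
          · exact absurd rfl huv
          · exact ⟨v, hv, hpuv, huv⟩
        · rcases hv with rfl | hv
          · exact ⟨u, hu, hpuv.symm, Ne.symm huv⟩
          · exfalso
            simp only [Set.mem_diff, Set.mem_insert_iff, not_or] at hu hv
            obtain ⟨hu1, hu2⟩ := claim x hx y hy hxy hpxy u hu.1 hu.2.1 hu.2.2
            obtain ⟨hv1, hv2⟩ := claim x hx y hy hxy hpxy v hv.1 hv.2.1 hv.2.2
            exact hu0v0 (uniq3 (x 0) (y 0) (u 0) (v 0) hx0y0 hu1 hu2 hv1 hv2)
      obtain ⟨z, hzm, hpxz, hxz⟩ := hkey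
      have hzC : z ∈ C := hzm.1
      have hCsub : C ⊆ {x, y, z} := by
        intro w hw
        by_contra hwm
        simp only [Set.mem_insert_iff, Set.mem_singleton_iff, not_or] at hwm
        obtain ⟨hwx, hwy, hwz⟩ := hwm
        have hwmem : w ∈ C \ {x, y} := ⟨hw, by simp [hwx, hwy]⟩
        obtain ⟨hw1, hw2⟩ := claim x hx y hy hxy hpxy w hw hwx hwy
        have hw3 := (claim x hx z hzC hxz hpxz w hw hwx hwz).2
        simp only [Set.mem_diff, Set.mem_insert_iff, not_or, Set.mem_singleton_iff] at hzm
        obtain ⟨hz1, hz2⟩ := claim x hx y hy hxy hpxy z hzC hzm.2.1 hzm.2.2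
        exact hw3 (uniq3 (x 0) (y 0) (w 0) (z 0) hx0y0 hw1 hw2 hz1 hz2)
      have h3 : C.ncard ≤ 3 := by
        calc C.ncard ≤ ({x, y, z} : Set (Fin (n+1) → Fin 3)).ncard :=
              Set.ncard_le_ncard hCsub (Set.toFinite _)
          _ ≤ 3 := by
              apply le_trans (Set.ncard_insert_le _ _)
              have := Set.ncard_insert_le y ({z} : Set (Fin (n+1) → Fin 3))
              simp only [Set.ncard_singleton] at this
              omega
      rw [Nat.le_div_iff_mul_le (by norm_num)]
      omega

end TrifAux

theorem T_recursion {n : ℕ} (hn : 2 ≤ n) : T n ≤ 3 * T (n - 1) / 2 := by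
  obtain ⟨m, rfl⟩ : ∃ m, n = m + 1 := ⟨n - 1, by omega⟩
  have hm : 1 ≤ m := by omega
  obtain ⟨C, hC, hcard⟩ := TrifAux.T_attained (m + 1)
  have := TrifAux.key hm hC
  simpa [hcard] using this
end

section
/- For every k ≥ 3 and n ≥ 1, every perfect k-hash code C of length n satisfies #C ≤ (k−1) · (k/(k−1))^n, equivalently (k−1)^{n−1} · #C ≤ k^n. -/
/-- A code `C ⊆ {0,…,k-1}ⁿ` is a perfect `k`-hash code if for any `k` pairwise
distinct codewords there exists a coordinate in which they are pairwise distinct. -/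
def PerfectHash {k n : ℕ} (C : Set (Fin n → Fin k)) : Prop :=
  ∀ f : Fin k → (Fin n → Fin k), (∀ a, f a ∈ C) → Function.Injective f →
    ∃ i : Fin n, Function.Injective fun a => f a i

/-!
Induction on the length. Delete the codewords whose first symbol is the least frequent one, `a`;
at least a fraction `(k - 1) / k` of the code survives, as `C'`. The first coordinate takes at
most `k - 1` values on `C'`, so any `k` codewords of `C'` are separated by a later coordinate.
Hence, once `#C' ≥ k`, dropping the first coordinate is injective on `C'` and maps it onto a
perfect `k`-hash code of length one less; if `#C' < k` the bound is immediate.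
-/

open Function Finset

theorem Set.exists_card_sub_one_mul_ncard_le_mul_ncard_sep_ne {α β : Type*} [Fintype β]
    [Nonempty β] {s : Set α} (hs : s.Finite) (φ : α → β) :
    ∃ b, (Fintype.card β - 1) * s.ncard ≤ Fintype.card β * {x ∈ s | φ x ≠ b}.ncard := by
  classical
  lift s to Finset α using hs
  obtain ⟨b, -, hb⟩ := Finset.exists_card_fiber_le_of_card_le_nsmul (s := s) (f := φ)
    (b := (#s : ℚ) / Fintype.card β) Finset.univ_nonempty (by
      rw [nsmul_eq_mul, Finset.card_univ, mul_div_cancel₀]; positivity)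
  rw [le_div_iff₀ (by positivity)] at hb
  norm_cast at hb
  have hsplit := card_filter_add_card_filter_not (s := s) (fun x => φ x = b)
  have hsep : {x ∈ (s : Set α) | φ x ≠ b} = ↑(s.filter fun x => φ x ≠ b) := by ext; simp
  refine ⟨b, ?_⟩
  rw [hsep, Set.ncard_coe_finset, Set.ncard_coe_finset]
  obtain ⟨q, hq⟩ := Nat.exists_eq_add_one_of_ne_zero (Fintype.card_ne_zero (α := β))
  rw [hq] at hb ⊢
  rw [Nat.add_sub_cancel]
  -- with `F`, `R` the counts of `φ x = b` and `φ x ≠ b`: `(q + 1) F ≤ F + R` gives `q F ≤ R`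
  nlinarith

theorem Set.exists_injective_fin_subsuperset {α : Type*} [Finite α] {s t : Set α} {k : ℕ}
    (hst : s ⊆ t) (hs : s.ncard ≤ k) (ht : k ≤ t.ncard) :
    ∃ f : Fin k → α, Injective f ∧ (∀ b, f b ∈ t) ∧ s ⊆ Set.range f := by
  obtain ⟨u, hsu, hut, hu⟩ := Set.exists_subsuperset_card_eq hst hs ht
  let e : u ≃ Fin k := Finite.equivFinOfCardEq (by rw [Nat.card_coe_set_eq, hu])
  exact ⟨fun b => e.symm b, Subtype.val_injective.comp e.symm.injective,
    fun b => hut (e.symm b).2, fun x hx => ⟨e ⟨x, hsu hx⟩, by simp⟩⟩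

namespace PerfectHash

variable {k n : ℕ}

theorem mono {C D : Set (Fin n → Fin k)} (hC : PerfectHash C) (hDC : D ⊆ C) :
    PerfectHash D :=
  fun f hf hinj => hC f (fun a => hDC (hf a)) hinj

variable {C : Set (Fin (n + 1) → Fin k)} {a : Fin k}

theorem exists_injective_succ (hC : PerfectHash C) (ha : ∀ c ∈ C, c 0 ≠ a)
    {f : Fin k → Fin (n + 1) → Fin k} (hf : ∀ b, f b ∈ C) (hinj : Injective f) :
    ∃ i : Fin n, Injective fun b => f b i.succ := by
  obtain ⟨i, hi⟩ := hC f hf hinj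
  -- coordinate `0` misses `a`, so it cannot be injective on the `k` codewords `f b`
  induction i using Fin.cases with
  | zero =>
    obtain ⟨b, hb⟩ := Finite.injective_iff_surjective.mp hi a
    exact absurd hb (ha _ (hf b))
  | succ i => exact ⟨i, hi⟩

theorem injOn_tail (hC : PerfectHash C) (ha : ∀ c ∈ C, c 0 ≠ a) (hk : 2 ≤ k)
    (hkC : k ≤ C.ncard) : Set.InjOn Fin.tail C := by
  intro u hu v hv huv
  have huvC : {u, v} ⊆ C := Set.insert_subset hu (Set.singleton_subset_iff.mpr hv)
  have huv_card : ({u, v} : Set _).ncard ≤ k :=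
    (Set.ncard_insert_le _ _).trans (by rwa [Set.ncard_singleton])
  obtain ⟨f, hinj, hf, hrange⟩ := Set.exists_injective_fin_subsuperset huvC huv_card hkC
  obtain ⟨i, hi⟩ := hC.exists_injective_succ ha hf hinj
  obtain ⟨b, rfl⟩ := hrange (Set.mem_insert u _)
  obtain ⟨b', rfl⟩ := hrange (Set.mem_insert_of_mem _ rfl)
  rw [hi (congrFun huv i)]

theorem image_tail (hC : PerfectHash C) (ha : ∀ c ∈ C, c 0 ≠ a) :
    PerfectHash (Fin.tail '' C) := by
  intro f hf hinj
  choose g hgC hgf using hf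
  obtain ⟨i, hi⟩ := hC.exists_injective_succ ha hgC
    fun b b' h => hinj (by rw [← hgf b, ← hgf b', h])
  refine ⟨i, fun b b' h => hi ?_⟩
  simp only [← hgf] at h
  exact h

theorem pow_mul_ncard_le (hk : 2 ≤ k) :
    ∀ {n : ℕ} {C : Set (Fin (n + 1) → Fin k)}, PerfectHash C →
      (k - 1) ^ n * C.ncard ≤ k ^ (n + 1)
  | 0, C, _ => by simpa using C.ncard_le_card
  | n + 1, C, hC => by
    have : Nonempty (Fin k) := ⟨⟨0, by omega⟩⟩
    obtain ⟨a, ha⟩ := Set.exists_card_sub_one_mul_ncard_le_mul_ncard_sep_ne C.toFinite (· 0)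
    rw [Fintype.card_fin] at ha
    set C' := {c ∈ C | c 0 ≠ a}
    have hC' : PerfectHash C' := hC.mono (Set.sep_subset _ _)
    have hC'a : ∀ c ∈ C', c 0 ≠ a := fun c hc => hc.2
    have hC'_bound : (k - 1) ^ n * C'.ncard ≤ k ^ (n + 1) := by
      rcases lt_or_ge C'.ncard k with hsmall | hlarge
      · calc (k - 1) ^ n * C'.ncard ≤ k ^ n * k :=
              Nat.mul_le_mul (Nat.pow_le_pow_left (Nat.sub_le _ _) _) hsmall.le
          _ = k ^ (n + 1) := (pow_succ _ _).symm
      · rw [← (hC'.injOn_tail hC'a hk hlarge).ncard_image]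
        exact pow_mul_ncard_le hk (hC'.image_tail hC'a)
    calc (k - 1) ^ (n + 1) * C.ncard = (k - 1) ^ n * ((k - 1) * C.ncard) := by ring
      _ ≤ (k - 1) ^ n * (k * C'.ncard) := Nat.mul_le_mul_left _ ha
      _ = k * ((k - 1) ^ n * C'.ncard) := by ring
      _ ≤ k * k ^ (n + 1) := Nat.mul_le_mul_left _ hC'_bound
      _ = k ^ (n + 2) := by ring

end PerfectHash

theorem perfect_hash_simple_bound {k n : ℕ} (hk : 3 ≤ k) (hn : 1 ≤ n)
    (C : Set (Fin n → Fin k)) (hC : PerfectHash C) :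
    (k - 1) ^ (n - 1) * C.ncard ≤ k ^ n := by
  obtain ⟨m, rfl⟩ := Nat.exists_eq_add_of_le' hn
  simpa using hC.pow_mul_ncard_le (by omega)
end
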